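/- arXiv:2311.13124 — 3 statements merged into one kernel-verified Lean document; each statement's English description precedes it below -/
import Mathlib

section
/- For the walk with resets, for every n ∈ ℕ and every k ∈ ℤ one has Pr(Y_n = k) = [u^k]P(u)^n + q · Σ_{j=0}^{n−1} [u^k]P(u)^j, where [u^k]G denotes the coefficient of u^k in the Laurent polynomial G. -/
/-- Altitude of the walk with resets after `j` steps, driven by the letters
`ω 0, ω 1, …` where `none` means a reset and `some k` means a jump by `k ∈ S`. -/
def walkY (S : Finset ℤ) (ω : ℕ → Option {k // k ∈ S}) : ℕ → ℤ
  | 0 => 0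
  | j + 1 =>
    match ω j with
    | none => 0
    | some k => walkY S ω j + (k : ℤ)

open Classical in
/-- Probability of the event `E` under the product measure on walks of length `n`,
where each letter `some k` (for `k ∈ S`) has weight `p k` and `none` (reset) has weight `q`. -/
noncomputable def walkPr (S : Finset ℤ) (p : ℤ → ℝ) (q : ℝ) (n : ℕ)
    (E : (ℕ → Option {k // k ∈ S}) → Prop) : ℝ :=
  ∑ ω : Fin n → Option {k // k ∈ S},
    (∏ i, Option.elim (ω i) q (fun k => p k)) *
      (if E (fun j => if h : j < n then ω ⟨j, h⟩ else none) then 1 else 0)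

private lemma walkY_congr (S : Finset ℤ) (ω ω' : ℕ → Option {k // k ∈ S}) :
    ∀ j, (∀ i < j, ω i = ω' i) → walkY S ω j = walkY S ω' j
  | 0, _ => rfl
  | j+1, h => by
    have h1 : ω j = ω' j := h j (Nat.lt_succ_self j)
    have h2 := walkY_congr S ω ω' j fun i hi => h i (hi.trans (Nat.lt_succ_self j))
    cases h' : ω' j with
    | none => simp [walkY, h1, h', h2]
    | some m => simp [walkY, h1, h', h2]

private lemma coeff_one (k : ℤ) :
    AddMonoidAlgebra.coeff (1 : LaurentPolynomial ℝ) k = if (0:ℤ) = k then 1 else 0 := by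
  rw [AddMonoidAlgebra.one_def]
  exact Finsupp.single_apply

private lemma coeff_sum_mul (S : Finset ℤ) (p : ℤ → ℝ) (Q : LaurentPolynomial ℝ) (k : ℤ) :
    AddMonoidAlgebra.coeff ((∑ m ∈ S, LaurentPolynomial.C (p m) * LaurentPolynomial.T m) * Q) k
      = ∑ m ∈ S, p m * AddMonoidAlgebra.coeff Q (k - m) := by
  rw [Finset.sum_mul, AddMonoidAlgebra.coeff_sum, Finsupp.finset_sum_apply]
  refine Finset.sum_congr rfl fun m _ => ?_
  rw [← LaurentPolynomial.single_eq_C_mul_T, AddMonoidAlgebra.coeff_single_mul_apply,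
    neg_add_eq_sub]

private lemma walkPr_total (S : Finset ℤ) (p : ℤ → ℝ) (q : ℝ)
    (hsum : q + ∑ k ∈ S, p k = 1) (n : ℕ) :
    ∑ ω : Fin n → Option {k // k ∈ S},
      ∏ i, Option.elim (ω i) q (fun k => p k) = 1 := by
  have h1 : (∑ a : Option {k // k ∈ S}, Option.elim a q (fun k => p ↑k)) = 1 := by
    rw [Fintype.sum_option]
    simp only [Option.elim_none, Option.elim_some]
    rw [Finset.sum_coe_sort S p]
    exact hsum
  have h := Fintype.sum_pow (fun a : Option {k // k ∈ S} => Option.elim a q (fun k => p ↑k)) n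
  rw [h1, one_pow] at h
  exact h.symm

private lemma walkY_snoc (S : Finset ℤ) (n : ℕ) (a : Option {k // k ∈ S})
    (ω : Fin n → Option {k // k ∈ S}) :
    walkY S (fun j => if h : j < n + 1 then
        (Fin.snocEquiv (fun _ : Fin (n+1) => Option {k // k ∈ S}) (a, ω)) ⟨j, h⟩ else none) (n+1)
      = (match a with
          | none => (0:ℤ)
          | some m => walkY S (fun j => if h : j < n then ω ⟨j, h⟩ else none) n + (m : ℤ)) := by
  have e1 : (if h : n < n + 1 then
      (Fin.snocEquiv (fun _ : Fin (n+1) => Option {k // k ∈ S}) (a, ω)) ⟨n, h⟩ else none) = a := by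
    simp [Fin.snoc]
  have hW : walkY S (fun j => if h : j < n + 1 then
        (Fin.snocEquiv (fun _ : Fin (n+1) => Option {k // k ∈ S}) (a, ω)) ⟨j, h⟩ else none) n
      = walkY S (fun j => if h : j < n then ω ⟨j, h⟩ else none) n := by
    refine walkY_congr S _ _ n fun i hi => ?_
    simp [hi, hi.trans (Nat.lt_succ_self n), Fin.snoc, Fin.castLT]
  simp only [walkY]
  rw [e1]
  cases a with
  | none => rfl
  | some m => rw [hW]

private lemma prod_snoc_weights (S : Finset ℤ) (p : ℤ → ℝ) (q : ℝ) (n : ℕ)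
    (a : Option {k // k ∈ S}) (ω : Fin n → Option {k // k ∈ S}) :
    (∏ i, Option.elim ((Fin.snocEquiv (fun _ : Fin (n+1) => Option {k // k ∈ S}) (a, ω)) i)
        q (fun k => p ↑k))
      = (∏ i, Option.elim (ω i) q (fun k => p ↑k)) * Option.elim a q (fun k => p ↑k) := by
  simp only [Fin.snocEquiv_apply]
  rw [Fin.prod_univ_castSucc]
  simp

private lemma walkPr_succ (S : Finset ℤ) (p : ℤ → ℝ) (q : ℝ)
    (hsum : q + ∑ k ∈ S, p k = 1) (n : ℕ) (k : ℤ) :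
    walkPr S p q (n+1) (fun Y => walkY S Y (n+1) = k)
      = q * (if (0:ℤ) = k then 1 else 0)
        + ∑ m : {k // k ∈ S}, p ↑m * walkPr S p q n (fun Y => walkY S Y n = k - ↑m) := by
  classical
  unfold walkPr
  rw [← Equiv.sum_comp (Fin.snocEquiv (fun _ : Fin (n+1) => Option {k // k ∈ S}))]
  rw [Fintype.sum_prod_type, Fintype.sum_option]
  congr 1
  · -- reset (none) part
    refine Eq.trans (Finset.sum_congr rfl fun ω _ =>
      (?_ : _ = (∏ i, Option.elim (ω i) q (fun k => p ↑k)) *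
        (q * (if (0:ℤ) = k then (1:ℝ) else 0)))) ?_
    · rw [prod_snoc_weights]
      simp only [walkY_snoc, Option.elim_none]
      rw [mul_assoc]
    · rw [← Finset.sum_mul, walkPr_total S p q hsum n, one_mul]
  · -- jump (some) part
    refine Finset.sum_congr rfl fun m _ => ?_
    refine Eq.trans (Finset.sum_congr rfl fun ω _ =>
      (?_ : _ = p ↑m * ((∏ i, Option.elim (ω i) q (fun k => p ↑k)) *
        (if walkY S (fun j => if h : j < n then ω ⟨j, h⟩ else none) n = k - ↑m
          then (1:ℝ) else 0)))) ?_
    · rw [prod_snoc_weights]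
      simp only [walkY_snoc, Option.elim_some]
      rw [mul_comm _ (p ↑m), mul_assoc]
      congr 1
      congr 1
      exact if_congr (eq_sub_iff_add_eq).symm rfl rfl
    · rw [← Finset.mul_sum]
      congr 1
      refine Finset.sum_congr rfl fun ω _ => ?_
      congr 1
      exact @if_congr ℝ _
        ((fun Y => walkY S Y n = k - ↑m) fun j => if h : j < n then ω ⟨j, h⟩ else none)
        _ (Classical.propDecidable _) _ _ _ _ Iff.rfl rfl rfl

/-- For the walk with resets,
`Pr(Y_n = k) = [u^k] P(u)^n + q ⬝ Σ_{j=0}^{n-1} [u^k] P(u)^j`,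
where `P(u) = Σ_{k ∈ S} p_k u^k` as a Laurent polynomial. -/
theorem walkWithResets_finalAltitude_coeff
    (S : Finset ℤ) (hS : S.Nonempty) (p : ℤ → ℝ) (q : ℝ)
    (hp : ∀ k ∈ S, 0 < p k) (hq0 : 0 < q) (hq1 : q < 1)
    (hsum : q + ∑ k ∈ S, p k = 1)
    (P : LaurentPolynomial ℝ)
    (hP : P = ∑ k ∈ S, LaurentPolynomial.C (p k) * LaurentPolynomial.T k)
    (n : ℕ) (k : ℤ) :
    walkPr S p q n (fun Y => walkY S Y n = k)
      = AddMonoidAlgebra.coeff (P ^ n) k + q * ∑ j ∈ Finset.range n, AddMonoidAlgebra.coeff (P ^ j) k := by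
  classical
  have hMul : ∀ (Q : LaurentPolynomial ℝ) (k : ℤ),
      AddMonoidAlgebra.coeff (P * Q) k = ∑ m ∈ S, p m * AddMonoidAlgebra.coeff Q (k - m) := fun Q k => by
    rw [hP]; exact coeff_sum_mul S p Q k
  induction n generalizing k with
  | zero =>
    rw [pow_zero, coeff_one, Finset.range_zero, Finset.sum_empty, mul_zero, add_zero]
    unfold walkPr
    rw [Fintype.sum_unique]
    simp [walkY]
    by_cases h0 : (0:ℤ) = k <;> simp [h0]
  | succ n ih =>
    rw [walkPr_succ S p q hsum n k]
    have e2 : (∑ m : {k // k ∈ S}, p ↑m * walkPr S p q n (fun Y => walkY S Y n = k - ↑m))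
        = ∑ m ∈ S, p m * (AddMonoidAlgebra.coeff (P^n) (k-m) + q * ∑ j ∈ Finset.range n, AddMonoidAlgebra.coeff (P^j) (k-m)) := by
      rw [← Finset.sum_coe_sort S
        (fun m => p m * (AddMonoidAlgebra.coeff (P^n) (k-m) + q * ∑ j ∈ Finset.range n, AddMonoidAlgebra.coeff (P^j) (k-m)))]
      exact Finset.sum_congr rfl fun m _ => by rw [ih]
    rw [e2, pow_succ', hMul (P^n) k, Finset.sum_range_succ', pow_zero, coeff_one]
    have e3 : ∀ j ∈ Finset.range n, AddMonoidAlgebra.coeff ((P:LaurentPolynomial ℝ)^(j+1)) k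
        = ∑ m ∈ S, p m * AddMonoidAlgebra.coeff (P^j) (k-m) := fun j _ => by
      rw [pow_succ']; exact hMul (P^j) k
    rw [Finset.sum_congr rfl e3]
    have lhs2 : ∑ m ∈ S, p m * (AddMonoidAlgebra.coeff (P^n) (k-m) + q * ∑ j ∈ Finset.range n, AddMonoidAlgebra.coeff (P^j) (k-m))
        = (∑ m ∈ S, p m * AddMonoidAlgebra.coeff (P^n) (k-m))
          + q * ∑ j ∈ Finset.range n, ∑ m ∈ S, p m * AddMonoidAlgebra.coeff (P^j) (k-m) := by
      simp only [mul_add, Finset.mul_sum]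
      rw [Finset.sum_add_distrib]
      congr 1
      rw [Finset.sum_comm]
      exact Finset.sum_congr rfl fun j _ => Finset.sum_congr rfl fun m _ => by ring
    rw [lhs2]
    ring
end

section
/- Fix p ∈ (0,1), q := 1 − p, and for h ∈ ℕ let D_h(z) := 1 − z + q p^{h+1} z^{h+2} (a complex polynomial). Then there exists h₀ such that for all h ≥ h₀ there is exactly one z ∈ ℂ with |z| < 1/p and D_h(z) = 0; moreover this root is real and satisfies 1 < z < 1/p. -/
/-- The denominator `D_h(z) = 1 - z + q p^{h+1} z^{h+2}` of the generating function of
Moran walks of height at most `h`, as a function of `z ∈ ℂ`. -/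
noncomputable def moranD (p q : ℝ) (h : ℕ) (z : ℂ) : ℂ :=
  1 - z + (q * p ^ (h + 1) : ℝ) * z ^ (h + 2)

/-- Lipschitz-type estimate for powers on a disc. -/
lemma abs_pow_sub_pow_le' (R : ℝ) (z w : ℂ) (hz : ‖z‖ ≤ R)
    (hw : ‖w‖ ≤ R) :
    ∀ n : ℕ, ‖z ^ (n + 1) - w ^ (n + 1)‖ ≤
      (n + 1) * R ^ n * ‖z - w‖ := by
  have hR : 0 ≤ R := le_trans (norm_nonneg z) hz
  intro n
  induction n with
  | zero => simp
  | succ n ih =>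
    have key : z ^ (n + 2) - w ^ (n + 2)
        = z * (z ^ (n + 1) - w ^ (n + 1)) + (z - w) * w ^ (n + 1) := by ring
    calc ‖z ^ (n + 2) - w ^ (n + 2)‖
        ≤ ‖z * (z ^ (n + 1) - w ^ (n + 1))‖
          + ‖(z - w) * w ^ (n + 1)‖ := by
          rw [key]; exact norm_add_le _ _
      _ = ‖z‖ * ‖z ^ (n + 1) - w ^ (n + 1)‖
          + ‖z - w‖ * ‖w‖ ^ (n + 1) := by
          simp [map_mul, map_pow]
      _ ≤ R * ((n + 1) * R ^ n * ‖z - w‖)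
          + ‖z - w‖ * R ^ (n + 1) := by
          gcongr
      _ = (↑(n + 1) + 1) * R ^ (n + 1) * ‖z - w‖ := by
          push_cast; ring

/-- For `p ∈ (0,1)`, `q = 1 - p`, there exists `h₀` such that for all
`h ≥ h₀` the polynomial `D_h` has exactly one root `z` with `|z| < 1/p`; moreover this
root is real and satisfies `1 < z < 1/p`. -/
theorem moranD_unique_small_root
    (p : ℝ) (hp0 : 0 < p) (hp1 : p < 1) (q : ℝ) (hq : q = 1 - p) :
    ∃ h₀ : ℕ, ∀ h ≥ h₀, ∃ x : ℝ,
      1 < x ∧ x < 1 / p ∧ moranD p q h (x : ℂ) = 0 ∧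
      ∀ z : ℂ, ‖z‖ < 1 / p → moranD p q h z = 0 → z = (x : ℂ) := by
  have hq0 : 0 < q := by rw [hq]; linarith
  have hp_inv : 1 < 1 / p := one_lt_one_div hp0 hp1
  set r : ℝ := (1 + 1 / p) / 2 with hr_def
  have hr1 : 1 < r := by rw [hr_def]; linarith
  have hrp : r < 1 / p := by rw [hr_def]; linarith
  have hr0 : 0 < r := by linarith
  set m : ℝ := p * r with hm_def
  have hm0 : 0 < m := mul_pos hp0 hr0
  have hm1 : m < 1 := by
    have := (mul_lt_mul_iff_right₀ hp0).2 hrp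
    rwa [mul_one_div, div_self (ne_of_gt hp0)] at this
  -- eventual smallness conditions
  have T1 : Filter.Tendsto (fun h : ℕ => q * p ^ (h + 1) * r ^ (h + 2))
      Filter.atTop (nhds 0) := by
    have : (fun h : ℕ => q * p ^ (h + 1) * r ^ (h + 2))
        = fun h : ℕ => (q * p * r ^ 2) * m ^ h := by
      funext h
      rw [hm_def, mul_pow]
      ring
    rw [this]
    simpa using (tendsto_pow_atTop_nhds_zero_of_lt_one hm0.le hm1).const_mul
      (q * p * r ^ 2)
  have T2 : Filter.Tendsto (fun h : ℕ => q * ((h : ℝ) + 2) * m ^ (h + 1))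
      Filter.atTop (nhds 0) := by
    have base : Filter.Tendsto (fun k : ℕ => (k : ℝ) * m ^ k)
        Filter.atTop (nhds 0) := tendsto_self_mul_const_pow_of_lt_one hm0.le hm1
    have comp : Filter.Tendsto (fun h : ℕ => ((h + 2 : ℕ) : ℝ) * m ^ (h + 2))
        Filter.atTop (nhds 0) := base.comp (Filter.tendsto_add_atTop_nat 2)
    have : (fun h : ℕ => q * ((h : ℝ) + 2) * m ^ (h + 1))
        = fun h : ℕ => (q / m) * (((h + 2 : ℕ) : ℝ) * m ^ (h + 2)) := by
      funext h
      push_cast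
      field_simp
      ring
    rw [this]
    simpa using comp.const_mul (q / m)
  have E1 : ∀ᶠ h : ℕ in Filter.atTop,
      q * p ^ (h + 1) * r ^ (h + 2) < (r - 1) / 2 :=
    T1.eventually_lt_const (by linarith)
  have E2 : ∀ᶠ h : ℕ in Filter.atTop,
      q * ((h : ℝ) + 2) * m ^ (h + 1) < 1 / 2 :=
    T2.eventually_lt_const (by norm_num)
  obtain ⟨h₀, H⟩ := Filter.eventually_atTop.1 (E1.and E2)
  refine ⟨h₀, fun h hh => ?_⟩
  obtain ⟨Ha, Hb⟩ := H h hh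
  set n : ℕ := h + 2 with hn_def
  set c : ℝ := q * p ^ (h + 1) with hc_def
  have hc0 : 0 < c := mul_pos hq0 (pow_pos hp0 _)
  -- the real polynomial
  set f : ℝ → ℝ := fun t => 1 - t + c * t ^ n with hf_def
  have hf1 : 0 < f 1 := by simp [hf_def]; linarith
  have hcr : c * r ^ n = q * p ^ (h + 1) * r ^ (h + 2) := by rw [hc_def, hn_def]
  have hfr : f r < 0 := by
    have : c * r ^ n < (r - 1) / 2 := by rw [hcr]; exact Ha
    simp only [hf_def]
    linarith
  have hcont : ContinuousOn f (Set.Icc 1 r) := (by fun_prop : Continuous f).continuousOn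
  have hmem : (0 : ℝ) ∈ Set.Ioo (f r) (f 1) := ⟨hfr, hf1⟩
  obtain ⟨x, hx_mem, hfx⟩ := intermediate_value_Ioo' hr1.le hcont hmem
  refine ⟨x, hx_mem.1, lt_trans hx_mem.2 hrp, ?_, ?_⟩
  · -- x is a root
    have : ((f x : ℝ) : ℂ) = 0 := by rw [hfx]; norm_num
    rw [moranD]
    rw [hf_def] at this
    push_cast at this ⊢
    convert this using 2; norm_num [hc_def, hn_def]
  · -- uniqueness
    intro z hz hDz
    have hx0 : (0 : ℝ) < x := lt_trans one_pos hx_mem.1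
    have hDz' : (1 : ℂ) - z + (c : ℝ) * z ^ n = 0 := by
      rw [moranD] at hDz
      rw [hc_def, hn_def]
      convert hDz using 2
    -- z - 1 = c z^n
    have hz_eq : z - 1 = (c : ℝ) * z ^ n := by
      linear_combination -hDz'
    -- step 1: |z| ≤ r
    have habs_z : ‖z‖ ≤ r := by
      by_contra hcon
      push_neg at hcon
      set t : ℝ := ‖z‖ with ht_def
      have ht_lt : t < 1 / p := hz
      have htr : r < t := hcon
      -- t - 1 ≤ c t^n
      have key : t - 1 ≤ c * t ^ n := by
        have h1 : t - 1 ≤ ‖z - 1‖ := by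
          have := norm_add_le (z - 1) 1
          simp only [sub_add_cancel, norm_one] at this
          linarith
        have h2 : ‖z - 1‖ = c * t ^ n := by
          rw [hz_eq]
          simp [map_mul, map_pow, Complex.norm_real, abs_of_pos hc0, ht_def]
        linarith [h1, h2.le]
      -- convexity argument with s = p t ∈ (m, 1)
      set s : ℝ := p * t with hs_def
      have hs_m : m < s := (mul_lt_mul_iff_right₀ hp0).2 htr
      have hs_1 : s < 1 := by
        have := (mul_lt_mul_iff_right₀ hp0).2 ht_lt
        rwa [mul_one_div, div_self (ne_of_gt hp0)] at this
      set a : ℝ := (1 - s) / (1 - m) with ha_def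
      set b : ℝ := (s - m) / (1 - m) with hb_def
      have hden : 0 < 1 - m := by linarith
      have ha0 : 0 < a := div_pos (by linarith) hden
      have hb0 : 0 < b := div_pos (by linarith) hden
      have hab : a + b = 1 := by
        rw [ha_def, hb_def, ← add_div, div_eq_one_iff_eq (ne_of_gt hden)]
        ring
      have hs_comb : s = a * m + b * 1 := by
        rw [ha_def, hb_def]
        field_simp
        ring
      -- convexity of s^n
      have hconv := (convexOn_pow (𝕜 := ℝ) n).2 (Set.mem_Ici.2 hm0.le)
        (Set.mem_Ici.2 (zero_le_one))
        ha0.le hb0.le hab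
      simp only [smul_eq_mul] at hconv
      have hpow : s ^ n ≤ a * m ^ n + b := by
        rw [hs_comb]
        simpa using hconv
      -- multiply root inequality by p : s - p ≤ q s^n
      have key2 : s - p ≤ q * s ^ n := by
        have hct : p * (c * t ^ n) = q * s ^ n := by
          rw [hc_def, hs_def, hn_def, mul_pow]
          ring
        have := (mul_le_mul_iff_right₀ hp0).2 key
        rw [hct] at this
        calc s - p = p * (t - 1) := by rw [hs_def]; ring
          _ ≤ q * s ^ n := this
      -- derive contradiction
      have key3 : s - p ≤ q * (a * m ^ n + b) := by
        calc s - p ≤ q * s ^ n := key2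
          _ ≤ q * (a * m ^ n + b) := by
            exact (mul_le_mul_iff_right₀ hq0).2 hpow
      have hlin : s - p = a * (m - p) + b * (1 - p) := by
        rw [hs_comb]
        have : (p : ℝ) = a * p + b * p := by rw [← add_mul, hab, one_mul]
        linarith [this]
      have hfinal : a * (m - p) ≤ a * (q * m ^ n) := by
        have hqb : b * (1 - p) = q * b := by rw [hq]; ring
        have hexp : q * (a * m ^ n + b) = a * (q * m ^ n) + q * b := by ring
        linarith
      have hmp : m - p ≤ q * m ^ n := le_of_mul_le_mul_left hfinal ha0
      -- but q * m^n = p * (q p^{h+1} r^{h+2}) < p (r-1)/2 while m - p = p(r-1)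
      have hqmn : q * m ^ n = p * (q * p ^ (h + 1) * r ^ (h + 2)) := by
        rw [hm_def, hn_def, mul_pow]
        ring
      have hmp' : m - p = p * (r - 1) := by rw [hm_def]; ring
      have hstep : p * (r - 1) ≤ p * ((r - 1) / 2) := by
        calc p * (r - 1) = m - p := hmp'.symm
          _ ≤ q * m ^ n := hmp
          _ = p * (q * p ^ (h + 1) * r ^ (h + 2)) := hqmn
          _ ≤ p * ((r - 1) / 2) := (mul_le_mul_iff_right₀ hp0).2 Ha.le
      have : r - 1 ≤ (r - 1) / 2 := le_of_mul_le_mul_left hstep hp0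
      linarith
    -- step 2: contraction
    have hx_eq : (x : ℂ) - 1 = (c : ℝ) * (x : ℂ) ^ n := by
      have hfx0 : 1 - x + c * x ^ n = 0 := hfx
      have : ((1 - x + c * x ^ n : ℝ) : ℂ) = 0 := by rw [hfx0]; norm_num
      push_cast at this
      linear_combination -this
    have habs_x : ‖(x : ℂ)‖ ≤ r := by
      rw [Complex.norm_real, Real.norm_eq_abs, abs_of_pos hx0]
      exact hx_mem.2.le
    have hdiff : z - (x : ℂ) = (c : ℝ) * (z ^ n - (x : ℂ) ^ n) := by
      linear_combination hz_eq - hx_eq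
    have hcontract : ‖z - (x : ℂ)‖ ≤
        (1 / 2) * ‖z - (x : ℂ)‖ := by
      have hbound := abs_pow_sub_pow_le' r z (x : ℂ) habs_z habs_x (h + 1)
      have hn_eq : n = (h + 1) + 1 := by rw [hn_def]
      calc ‖z - (x : ℂ)‖
          = c * ‖z ^ n - (x : ℂ) ^ n‖ := by
            rw [hdiff]
            simp [map_mul, Complex.norm_real, abs_of_pos hc0]
        _ ≤ c * (((h : ℝ) + 1 + 1) * r ^ (h + 1) * ‖z - (x : ℂ)‖) := by
            apply (mul_le_mul_iff_right₀ hc0).2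
            rw [hn_eq]
            convert hbound using 3
            · rfl
            push_cast
            ring
        _ = (q * ((h : ℝ) + 2) * m ^ (h + 1)) * ‖z - (x : ℂ)‖ := by
            rw [hc_def, hm_def, mul_pow]
            ring
        _ ≤ (1 / 2) * ‖z - (x : ℂ)‖ := by
            apply mul_le_mul_of_nonneg_right Hb.le (norm_nonneg _)
    have : ‖z - (x : ℂ)‖ ≤ 0 := by linarith
    have : z - (x : ℂ) = 0 := by
      have h0 := norm_nonneg (z - (x : ℂ))
      have : ‖z - (x : ℂ)‖ = 0 := le_antisymm this h0
      exact norm_eq_zero.1 this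
    linear_combination this
end

section
/- Fix p ∈ (0,1), q := 1 − p, and for h ∈ ℕ let D_h(z) := 1 − z + q p^{h+1} z^{h+2} (a complex polynomial of degree h+2). Then: (i) for every h, D_h(1/p) = 0; (ii) there exists h₀ such that for all h ≥ h₀, every z ∈ ℂ with |z| = 1/p and D_h(z) = 0 satisfies z = 1/p; (iii) for every ε > 0 there exists h₁ such that for all h ≥ h₁ every root z of D_h satisfies |z| < (1+ε)/p; and (iv) there exists h₂ such that for all h ≥ h₂ all roots of D_h are simple, i.e. D_h(z) = 0 implies D_h′(z) ≠ 0. -/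
/-- The derivative `D_h′(z) = -1 + (h+2) q p^{h+1} z^{h+1}`. -/
noncomputable def moranD' (p q : ℝ) (h : ℕ) (z : ℂ) : ℂ :=
  -1 + ((h : ℂ) + 2) * (q * p ^ (h + 1) : ℝ) * z ^ (h + 1)

/-- For `p ∈ (0,1)`, `q = 1 - p`:
(i) `D_h(1/p) = 0` for all `h`;
(ii) for large `h`, the only root of `D_h` of modulus `1/p` is `1/p`;
(iii) for every `ε > 0`, for large `h` every root of `D_h` has modulus `< (1+ε)/p`;
(iv) for large `h`, all roots of `D_h` are simple. -/
theorem moranD_roots_localization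
    (p : ℝ) (hp0 : 0 < p) (hp1 : p < 1) (q : ℝ) (hq : q = 1 - p) :
    (∀ h : ℕ, moranD p q h ((1 / p : ℝ) : ℂ) = 0)
    ∧ (∃ h₀ : ℕ, ∀ h ≥ h₀, ∀ z : ℂ,
        ‖z‖ = 1 / p → moranD p q h z = 0 → z = ((1 / p : ℝ) : ℂ))
    ∧ (∀ ε : ℝ, 0 < ε → ∃ h₁ : ℕ, ∀ h ≥ h₁, ∀ z : ℂ,
        moranD p q h z = 0 → ‖z‖ < (1 + ε) / p)
    ∧ (∃ h₂ : ℕ, ∀ h ≥ h₂, ∀ z : ℂ,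
        moranD p q h z = 0 → moranD' p q h z ≠ 0) := by
  have hp : p ≠ 0 := ne_of_gt hp0
  have hq0 : 0 < q := by rw [hq]; linarith
  have hpc : (p : ℂ) ≠ 0 := by exact_mod_cast hp
  have hqc : (q : ℂ) = 1 - (p : ℂ) := by rw [hq]; push_cast; ring
  refine ⟨?_, ?_, ?_, ?_⟩
  · -- (i)
    intro h
    unfold moranD
    push_cast
    rw [hqc]
    field_simp
    have e1 : (p:ℂ)^2 * (p:ℂ)⁻¹^2 = 1 := by rw [← mul_pow, mul_inv_cancel₀ hpc, one_pow]
    have e2 : (p:ℂ)^h * (p:ℂ)⁻¹^h = 1 := by rw [← mul_pow, mul_inv_cancel₀ hpc, one_pow]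
    linear_combination (1 - (p:ℂ)) * ((p:ℂ)^h * (p:ℂ)⁻¹^h * e1 + e2)
  · -- (ii)
    refine ⟨0, fun h _ z habs hz => ?_⟩
    unfold moranD at hz
    have hz' : z - 1 = ((q * p ^ (h + 1) : ℝ) : ℂ) * z ^ (h + 2) := by
      linear_combination -hz
    have hA : (0:ℝ) < q * p ^ (h + 1) := by positivity
    have habs2 : ‖z - 1‖ = q / p := by
      rw [hz', norm_mul, Complex.norm_real, Real.norm_eq_abs, norm_pow, habs, abs_of_pos hA]
      field_simp
      have e1 : p^2 * p⁻¹^2 = 1 := by rw [← mul_pow, mul_inv_cancel₀ hp, one_pow]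
      have e2 : p^h * p⁻¹^h = 1 := by rw [← mul_pow, mul_inv_cancel₀ hp, one_pow]
      linear_combination p^h * p⁻¹^h * e1 + e2
    have e1 : z.re * z.re + z.im * z.im = (1 / p) ^ 2 := by
      have := congrArg (· ^ 2) habs
      simpa [Complex.sq_norm, Complex.normSq_apply] using this
    have e2 : (z.re - 1) * (z.re - 1) + z.im * z.im = (q / p) ^ 2 := by
      have := congrArg (· ^ 2) habs2
      simpa [Complex.sq_norm, Complex.normSq_apply] using this
    have hp2 : (0:ℝ) < p ^ 2 := by positivity
    have hre : z.re = 1 / p := by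
      have h1 : (1 / p) ^ 2 = 1 / p ^ 2 := by field_simp
      have h2 : (q / p) ^ 2 = q ^ 2 / p ^ 2 := by field_simp
      rw [h1] at e1; rw [h2] at e2
      have hqsq : q ^ 2 = 1 - 2 * p + p ^ 2 := by rw [hq]; ring
      -- from e2 - e1 : -2 z.re + 1 = (q^2 - 1)/p^2 = (p^2 - 2p)/p^2 = 1 - 2/p
      have e3 : (-2*z.re + 1 : ℝ) = (q^2 - 1)/p^2 := by linear_combination e2 - e1
      have e4 : (q^2 - 1)/p^2 = 1 - 2*(1/p) := by rw [hq]; field_simp; ring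
      rw [e4] at e3
      linarith
    have him : z.im = 0 := by
      have : z.im * z.im = 0 := by
        linear_combination e1 - (z.re + 1/p) * hre
      exact mul_self_eq_zero.mp this
    apply Complex.ext <;> simp [hre, him]
  · -- (iii)
    intro ε hε
    obtain ⟨N, hN⟩ := pow_unbounded_of_one_lt (2 / q) (by linarith : (1:ℝ) < 1 + ε)
    refine ⟨N, fun h hh z hz => ?_⟩
    by_contra hcon
    push_neg at hcon
    set r := ‖z‖ with hr
    have hrpos : (1 + ε) / p ≤ r := hcon
    have h1r : 1 < r := by
      have : 1 < (1 + ε) / p := by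
        rw [lt_div_iff₀ hp0]; linarith
      linarith
    unfold moranD at hz
    have hz' : z - 1 = ((q * p ^ (h + 1) : ℝ) : ℂ) * z ^ (h + 2) := by
      linear_combination -hz
    have hA : (0:ℝ) < q * p ^ (h + 1) := by positivity
    have habs2 : ‖z - 1‖ = q * p ^ (h + 1) * r ^ (h + 2) := by
      rw [hz', norm_mul, Complex.norm_real, Real.norm_eq_abs, norm_pow, abs_of_pos hA]
    have hub : ‖z - 1‖ ≤ r + 1 := by
      calc ‖z - 1‖ ≤ ‖z‖ + ‖(1:ℂ)‖ :=
            norm_sub_le z 1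
        _ = r + 1 := by simp [hr]
    have hpr : 1 + ε ≤ p * r := by
      rw [div_le_iff₀ hp0] at hrpos; linarith [mul_comm r p]
    have hpow1 : (1 + ε) ^ (h + 1) ≤ (p * r) ^ (h + 1) :=
      pow_le_pow_left₀ (by linarith) hpr _
    have hpow2 : (2 / q) < (1 + ε) ^ (h + 1) :=
      lt_of_lt_of_le hN (pow_le_pow_right₀ (by linarith) (by omega))
    have h2q : 2 < q * (1 + ε) ^ (h + 1) := by
      rw [div_lt_iff₀ hq0] at hpow2; linarith [mul_comm ((1+ε)^(h+1)) q]
    have key : q * p ^ (h + 1) * r ^ (h + 2) = q * (p * r) ^ (h + 1) * r := by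
      rw [mul_pow]; ring
    have hrpos' : 0 < r := by linarith
    have hbig : 2 * r < q * p ^ (h + 1) * r ^ (h + 2) := by
      rw [key]
      have : q * (1 + ε) ^ (h + 1) * r ≤ q * (p * r) ^ (h + 1) * r := by
        have := mul_le_mul_of_nonneg_left hpow1 (le_of_lt hq0)
        exact mul_le_mul_of_nonneg_right this (le_of_lt hrpos')
      nlinarith
    linarith [habs2 ▸ hub]
  · -- (iv)
    have htend : Filter.Tendsto (fun n : ℕ => ((n:ℝ) + 2) * p ^ (n + 1))
        Filter.atTop (nhds 0) := by
      have t1 := tendsto_pow_const_mul_const_pow_of_lt_one 1 hp0.le hp1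
      have t2 := t1.comp (Filter.tendsto_add_atTop_nat 2)
      have t3 := t2.const_mul (1 / p)
      simp only [mul_zero] at t3
      refine t3.congr (fun n => ?_)
      simp only [Function.comp]
      push_cast
      field_simp
      ring
    have hev := htend.eventually (gt_mem_nhds (show (0:ℝ) < 1 / (3 * q) by positivity))
    rw [Filter.eventually_atTop] at hev
    obtain ⟨h₂, hh₂⟩ := hev
    refine ⟨h₂, fun h hh z hz hz' => ?_⟩
    unfold moranD at hz
    unfold moranD' at hz'
    have h1c : ((h:ℂ) + 1) ≠ 0 := by
      have : ((h:ℝ) + 1) ≠ 0 := by positivity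
      exact_mod_cast this
    have h2c : ((h:ℂ) + 2) ≠ 0 := by
      have : ((h:ℝ) + 2) ≠ 0 := by positivity
      exact_mod_cast this
    have zval : ((h:ℂ) + 1) * z = (h:ℂ) + 2 := by
      linear_combination z * hz' - ((h:ℂ) + 2) * hz
    set w : ℝ := ((h:ℝ) + 2) / ((h:ℝ) + 1) with hw
    have hzw : z = ((w : ℝ) : ℂ) := by
      rw [hw]
      push_cast
      field_simp
      linear_combination zval
    rw [hzw] at hz'
    have hreal : -1 + ((h:ℝ) + 2) * (q * p ^ (h + 1)) * w ^ (h + 1) = 0 := by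
      have : ((-1 + ((h:ℝ) + 2) * (q * p ^ (h + 1)) * w ^ (h + 1) : ℝ) : ℂ) = 0 := by
        push_cast at hz' ⊢
        linear_combination hz'
      exact_mod_cast this
    -- bound w ^ (h+1) ≤ 3
    have hm : (0:ℝ) < (h:ℝ) + 1 := by positivity
    have hwe : w = 1 + 1 / ((h:ℝ) + 1) := by rw [hw]; field_simp; ring
    have hwle : w ≤ Real.exp (1 / ((h:ℝ) + 1)) := by
      rw [hwe]
      have := Real.add_one_le_exp (1 / ((h:ℝ) + 1))
      linarith
    have hw0 : 0 ≤ w := by rw [hwe]; positivity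
    have hw3 : w ^ (h + 1) ≤ 3 := by
      calc w ^ (h + 1) ≤ Real.exp (1 / ((h:ℝ) + 1)) ^ (h + 1) :=
            pow_le_pow_left₀ hw0 hwle _
        _ = Real.exp (((h:ℕ) + 1 : ℕ) * (1 / ((h:ℝ) + 1))) := by
            rw [Real.exp_nat_mul]
        _ = Real.exp 1 := by
            congr 1
            push_cast
            rw [mul_one_div]
            exact div_self (by positivity)
        _ ≤ 3 := by linarith [Real.exp_one_lt_d9]
    have hsmall : ((h:ℝ) + 2) * p ^ (h + 1) < 1 / (3 * q) := hh₂ h hh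
    have hApos : (0:ℝ) < q * p ^ (h + 1) := by positivity
    have hwpos : 0 < w ^ (h + 1) := by
      rw [hwe]; positivity
    -- hreal : (h+2) * (q * p^(h+1)) * w^(h+1) = 1
    have h3q : (0:ℝ) < 3 * q := by positivity
    rw [lt_div_iff₀ h3q] at hsmall
    have hcoef : (0:ℝ) ≤ ((h:ℝ) + 2) * (q * p ^ (h + 1)) := by positivity
    have hfin : ((h:ℝ) + 2) * (q * p ^ (h + 1)) * w ^ (h + 1)
        ≤ ((h:ℝ) + 2) * (q * p ^ (h + 1)) * 3 :=
      mul_le_mul_of_nonneg_left hw3 hcoef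
    nlinarith [hreal, hfin, hsmall]
end
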